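/- Let r be an infinite regular cardinal, let B be a small category with products of families of fewer than r objects, let F : B ⥤ C be any functor into a locally small category C, and let (cᵢ)_{i ∈ I} be a family of objects of C with |I| < r whose product ∏ᵢ cᵢ exists in C. Then the functor W : ∏ᵢ (F/cᵢ) ⥤ F/(∏ᵢ cᵢ), sending (bᵢ, zᵢ)ᵢ to (∏ᵢ bᵢ, z) where z : F(∏ᵢ bᵢ) ⟶ ∏ᵢ cᵢ is induced by the morphisms zᵢ ∘ F(pᵢ) (pᵢ the product projections in B), admits a left adjoint L : F/(∏ᵢ cᵢ) ⥤ ∏ᵢ (F/cᵢ), (b, z) ↦ ((b, πᵢ ∘ z))ᵢ (πᵢ the product projections in C); consequently W is a final functor, and for any functor X : B ⥤ E into a category E with small colimits, colim(X ∘ V_{F, ∏ᵢ cᵢ}) ≅ colim(X ∘ ⊗ᵢ V_{F, cᵢ}). -/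

import Mathlib

/-!
STATEMENT 8: Let `r` be an infinite regular cardinal, `B` a small category with products of
families of fewer than `r` objects, `F : B ⥤ C` any functor into a locally small category
`C`, and `(cᵢ)_{i ∈ I}` a family of objects of `C` with `|I| < r` whose product exists.
Then the functor `W : ∏ᵢ (F/cᵢ) ⥤ F/(∏ᵢ cᵢ)`, `(bᵢ, zᵢ)ᵢ ↦ (∏ᵢ bᵢ, z)` with `z` induced by
the `zᵢ ∘ F(pᵢ)`, admits a left adjoint `L : F/(∏ᵢ cᵢ) ⥤ ∏ᵢ (F/cᵢ)`,
`(b, z) ↦ ((b, πᵢ ∘ z))ᵢ`; consequently `W` is final, and for any `X : B ⥤ E` with `E`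
having small colimits, `colim (X ∘ V_{F, ∏ᵢ cᵢ}) ≅ colim (X ∘ ⊗ᵢ V_{F, cᵢ})`.
-/

open CategoryTheory CategoryTheory.Limits Opposite

universe u v w e

variable {B : Type u} [SmallCategory B] {C : Type v} [Category.{u} C]

/-- Volger's comparison functor `W : ∏ᵢ (F/cᵢ) ⥤ F/(∏ᵢ cᵢ)`. -/
noncomputable def VolgerWFam (F : B ⥤ C) {I : Type u} [HasLimitsOfShape (Discrete I) B]
    (c : I → C) [HasProduct c] :
    (∀ i, CostructuredArrow F (c i)) ⥤ CostructuredArrow F (∏ᶜ c) where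
  obj p := CostructuredArrow.mk (Y := ∏ᶜ fun i => (p i).left)
    (Pi.lift fun i => F.map (Pi.π (fun j => (p j).left) i) ≫ (p i).hom)
  map {p q} f := CostructuredArrow.homMk (Limits.Pi.map fun i => (f i).left) (by
    apply Pi.hom_ext
    intro i
    simp [← Functor.map_comp_assoc])
  map_id p := by
    apply CostructuredArrow.hom_ext
    simp [Limits.Pi.map_id]
  map_comp f g := by
    apply CostructuredArrow.hom_ext
    simp [Limits.Pi.map_comp_map]

/-- The tensored forgetful functor `⊗ᵢ V_{F,cᵢ} : ∏ᵢ (F/cᵢ) ⥤ B`, the composite of the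
product of the forgetful functors with the `I`-fold product functor. -/
noncomputable def tensorProjFam (F : B ⥤ C) {I : Type u} [HasLimitsOfShape (Discrete I) B]
    (c : I → C) : (∀ i, CostructuredArrow F (c i)) ⥤ B where
  obj p := ∏ᶜ fun i => (p i).left
  map f := Limits.Pi.map fun i => (f i).left
  map_id p := by simp [Limits.Pi.map_id]
  map_comp f g := by simp [Limits.Pi.map_comp_map]


/-- The left adjoint `L : F/(∏ᵢ cᵢ) ⥤ ∏ᵢ (F/cᵢ)`. -/
@[reducible] noncomputable def VolgerLFam (F : B ⥤ C) {I : Type u} [HasLimitsOfShape (Discrete I) B]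
    (c : I → C) [HasProduct c] :
    CostructuredArrow F (∏ᶜ c) ⥤ ∀ i, CostructuredArrow F (c i) where
  obj bz := fun i => CostructuredArrow.mk (bz.hom ≫ Pi.π c i)
  map {bz bz'} f := fun i => CostructuredArrow.homMk f.left (by
    dsimp
    rw [← Category.assoc, CostructuredArrow.w f])
  map_id bz := by
    funext i
    apply CostructuredArrow.hom_ext
    simp
  map_comp f g := by
    funext i
    apply CostructuredArrow.hom_ext
    simp

/-- The adjunction `L ⊣ W`. -/
noncomputable def VolgerAdjFam (F : B ⥤ C) {I : Type u} [HasLimitsOfShape (Discrete I) B]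
    (c : I → C) [HasProduct c] : VolgerLFam F c ⊣ VolgerWFam F c :=
  Adjunction.mkOfUnitCounit
    { unit :=
      { app := fun bz => CostructuredArrow.homMk (Pi.lift fun _ => 𝟙 bz.left) (by
          apply Pi.hom_ext
          intro i
          dsimp [VolgerLFam, VolgerWFam]
          simp [← Functor.map_comp_assoc])
        naturality := fun bz bz' f => by
          apply CostructuredArrow.hom_ext
          apply Pi.hom_ext
          intro i
          dsimp [VolgerLFam, VolgerWFam]
          simp [CostructuredArrow.homMk] }
      counit :=
      { app := fun p => fun i =>
          CostructuredArrow.homMk (Pi.π (fun j => (p j).left) i) (by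
            simp [VolgerLFam, VolgerWFam])
        naturality := fun p q f => by
          funext i
          apply CostructuredArrow.hom_ext
          simp [VolgerLFam, VolgerWFam, CostructuredArrow.homMk] }
      left_triangle := by
        ext bz i
        dsimp [VolgerLFam, VolgerWFam]
        simp [CostructuredArrow.homMk]
      right_triangle := by
        ext p
        dsimp [VolgerLFam, VolgerWFam]
        apply Pi.hom_ext
        intro i
        simp [CostructuredArrow.homMk] }

theorem statement8 (r : Cardinal.{u}) (hr : r.IsRegular)
    (hB : ∀ J : Type u, Cardinal.mk J < r → HasLimitsOfShape (Discrete J) B)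
    (F : B ⥤ C) {I : Type u} (hI : Cardinal.mk I < r)
    [HasLimitsOfShape (Discrete I) B] (c : I → C) [HasProduct c]
    {E : Type e} [Category.{w} E] [HasColimitsOfSize.{u, u} E] (X : B ⥤ E) :
    (∃ (L : CostructuredArrow F (∏ᶜ c) ⥤ ∀ i, CostructuredArrow F (c i))
      (_ : L ⊣ VolgerWFam F c),
        ∀ bz : CostructuredArrow F (∏ᶜ c),
          L.obj bz = fun i => CostructuredArrow.mk (bz.hom ≫ Pi.π c i)) ∧
    (VolgerWFam F c).Final ∧
    Nonempty (colimit (CostructuredArrow.proj F (∏ᶜ c) ⋙ X) ≅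
      colimit (tensorProjFam F c ⋙ X)) := by
  have hfinal : (VolgerWFam F c).Final :=
    Functor.final_of_adjunction (VolgerAdjFam F c)
  refine ⟨⟨VolgerLFam F c, VolgerAdjFam F c, fun bz => rfl⟩, hfinal, ?_⟩
  have heq : VolgerWFam F c ⋙ CostructuredArrow.proj F (∏ᶜ c) = tensorProjFam F c := rfl
  exact ⟨((Functor.Final.colimitIso (VolgerWFam F c)
    (CostructuredArrow.proj F (∏ᶜ c) ⋙ X)).symm.trans
    (HasColimit.isoOfNatIso (Iso.refl _)))⟩
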